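/- arXiv:2105.03307 — 2 statements merged into one kernel-verified Lean document; each statement's English description precedes it below -/
import Mathlib

section
/- Given three persistence modules A, B, C over ℝ with a surjection f : A ↠ B whose kernel is ε-interleaved with 0, and an injection g : B ↪ C whose cokernel is ε-interleaved with 0, the composite Φ = g ∘ f : A → C admits a map Ψ : C → A[2ε] such that Φ and Ψ form a 2ε-interleaving between A and C. -/
/-!
Since `g` is injective and `f` surjective, `Φ = g ∘ f` has the kernel of `f` and the cokernel
of `g`, both `ε`-trivial. For such a `Φ`, every `C.map y` (shift `ε`) lifts along `Φ` to some
`x`, and two lifts differ by a kernel element, so `A.map x` (another shift `ε`) is well defined: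
this is `Ψ y`. The interleaving identities then follow from naturality of `Φ` and functoriality.
-/

open CategoryTheory

variable (F : Type) [Field F]

theorem LinearMap.exists_eq_of_range_le_of_ker_le {R M N P Q : Type*} [Ring R]
    [AddCommGroup M] [AddCommGroup N] [AddCommGroup P] [AddCommGroup Q]
    [Module R M] [Module R N] [Module R P] [Module R Q]
    (φ : M →ₗ[R] N) (c : P →ₗ[R] N) (α : M →ₗ[R] Q)
    (hc : range c ≤ range φ) (hα : ker φ ≤ ker α) :
    ∃ ψ : P →ₗ[R] Q, ∀ p m, φ m = c p → ψ p = α m := by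
  refine ⟨(ker φ).liftQ α hα ∘ₗ φ.quotKerEquivRange.symm.toLinearMap ∘ₗ
    c.codRestrict (range φ) fun p => hc (mem_range_self c p), fun p m hm => ?_⟩
  have : c.codRestrict (range φ) (fun p => hc (mem_range_self c p)) p =
      ⟨φ m, mem_range_self φ m⟩ := Subtype.ext hm.symm
  simp [this]

namespace PersistenceModule

variable {R : Type*} [Ring R] {A C : ℝ ⥤ ModuleCat R}

theorem map_homOfLE_map_homOfLE {s t u : ℝ} (hst : s ≤ t) (htu : t ≤ u) (x : A.obj s) :
    A.map (homOfLE htu) (A.map (homOfLE hst) x) = A.map (homOfLE (hst.trans htu)) x := by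
  rw [← ConcreteCategory.comp_apply, ← A.map_comp, homOfLE_comp]

theorem exists_interleaving_of_ker_coker (Φ : A ⟶ C) {ε : ℝ} (hε : 0 ≤ ε)
    (hker : ∀ (t : ℝ) (x : A.obj t), Φ.app t x = 0 →
      A.map (homOfLE (by linarith : t ≤ t + ε)) x = 0)
    (hcoker : ∀ (t : ℝ) (y : C.obj t), ∃ x : A.obj (t + ε),
      Φ.app (t + ε) x = C.map (homOfLE (by linarith : t ≤ t + ε)) y) :
    ∃ Ψ : ∀ t : ℝ, C.obj t ⟶ A.obj (t + ε + ε),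
      (∀ (s t : ℝ) (h : s ≤ t),
        Ψ s ≫ A.map (homOfLE (by linarith : s + ε + ε ≤ t + ε + ε))
          = C.map (homOfLE h) ≫ Ψ t) ∧
      (∀ t : ℝ, Φ.app t ≫ Ψ t = A.map (homOfLE (by linarith : t ≤ t + ε + ε))) ∧
      (∀ t : ℝ, Ψ t ≫ Φ.app (t + ε + ε)
          = C.map (homOfLE (by linarith : t ≤ t + ε + ε))) := by
  have hψ : ∀ t : ℝ, ∃ ψ : C.obj t →ₗ[R] A.obj (t + ε + ε), ∀ y x,
      Φ.app (t + ε) x = C.map (homOfLE (by linarith : t ≤ t + ε)) y →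
      ψ y = A.map (homOfLE (by linarith : t + ε ≤ t + ε + ε)) x := fun t =>
    LinearMap.exists_eq_of_range_le_of_ker_le (Φ.app (t + ε)).hom _ _
      (by rintro _ ⟨y, rfl⟩; exact hcoker t y) (fun x hx => hker (t + ε) x hx)
  choose ψ hψ using hψ
  refine ⟨fun t => ModuleCat.ofHom (ψ t), fun s t h => ?_, fun t => ?_, fun t => ?_⟩
  · ext y
    obtain ⟨x, hx⟩ := hcoker s y
    have hx' : Φ.app (t + ε) (A.map (homOfLE (by linarith : s + ε ≤ t + ε)) x)
        = C.map (homOfLE (by linarith : t ≤ t + ε)) (C.map (homOfLE h) y) := by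
      rw [NatTrans.naturality_apply, hx, map_homOfLE_map_homOfLE, map_homOfLE_map_homOfLE]
    simp only [ModuleCat.hom_comp, LinearMap.comp_apply, ModuleCat.hom_ofHom]
    rw [hψ s y x hx, hψ t _ _ hx', map_homOfLE_map_homOfLE, map_homOfLE_map_homOfLE]
  · ext x
    have hx : Φ.app (t + ε) (A.map (homOfLE (by linarith : t ≤ t + ε)) x)
        = C.map (homOfLE (by linarith : t ≤ t + ε)) (Φ.app t x) := NatTrans.naturality_apply ..
    simp only [ModuleCat.hom_comp, LinearMap.comp_apply, ModuleCat.hom_ofHom]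
    rw [hψ t _ _ hx, map_homOfLE_map_homOfLE]
  · ext y
    obtain ⟨x, hx⟩ := hcoker t y
    simp only [ModuleCat.hom_comp, LinearMap.comp_apply, ModuleCat.hom_ofHom]
    rw [hψ t y x hx, NatTrans.naturality_apply, hx, map_homOfLE_map_homOfLE]

end PersistenceModule

theorem right_left_interleaving_composite
    (A B C : ℝ ⥤ ModuleCat F) (ε : ℝ) (hε : 0 ≤ ε)
    (f : A ⟶ B) (hf_surj : ∀ t : ℝ, Function.Surjective (f.app t))
    (hker : ∀ (t : ℝ) (x : A.obj t), f.app t x = 0 →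
      A.map (homOfLE (by linarith : t ≤ t + ε)) x = 0)
    (g : B ⟶ C) (hg_inj : ∀ t : ℝ, Function.Injective (g.app t))
    (hcoker : ∀ (t : ℝ) (y : C.obj t), ∃ z : B.obj (t + ε),
      C.map (homOfLE (by linarith : t ≤ t + ε)) y = g.app (t + ε) z) :
    ∃ Ψ : ∀ t : ℝ, C.obj t ⟶ A.obj (t + ε + ε),
      (∀ (s t : ℝ) (h : s ≤ t),
        Ψ s ≫ A.map (homOfLE (by linarith : s + ε + ε ≤ t + ε + ε))
          = C.map (homOfLE h) ≫ Ψ t) ∧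
      (∀ t : ℝ, (f.app t ≫ g.app t) ≫ Ψ t
          = A.map (homOfLE (by linarith : t ≤ t + ε + ε))) ∧
      (∀ t : ℝ, Ψ t ≫ (f.app (t + ε + ε) ≫ g.app (t + ε + ε))
          = C.map (homOfLE (by linarith : t ≤ t + ε + ε))) := by
  have hker' : ∀ (t : ℝ) (x : A.obj t), (f ≫ g).app t x = 0 →
      A.map (homOfLE (by linarith : t ≤ t + ε)) x = 0 := fun t x hx =>
    hker t x (hg_inj t (by simpa using hx))
  have hcoker' : ∀ (t : ℝ) (y : C.obj t), ∃ x : A.obj (t + ε),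
      (f ≫ g).app (t + ε) x = C.map (homOfLE (by linarith : t ≤ t + ε)) y := by
    intro t y
    obtain ⟨z, hz⟩ := hcoker t y
    obtain ⟨x, rfl⟩ := hf_surj (t + ε) z
    exact ⟨x, hz.symm⟩
  exact PersistenceModule.exists_interleaving_of_ker_coker (f ≫ g) hε hker' hcoker'
end

section
/- Let K be a finite simplicial complex with a partition 𝒫 of its vertex set, and let 𝒥^K_𝒫 be the (K,𝒫)-join diagram over the simplex Δ^𝒫. Then the geometric realization Δ(𝒥^K_𝒫) is homeomorphic to the geometric realization |K|. -/
/-!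
STATEMENT 6 (Lemma: `Δ(𝒥^K_𝒫) ≃ₜ |K|`).

`K` is a finite abstract simplicial complex on a vertex type `V`, and the
partition `𝒫` of the vertex set is given by the fibers of a surjection
`π : V → B` onto the (finite) type of blocks.  For a block `b`, `K(b)` is the
maximal subcomplex with vertices in the fiber of `b`.  Realizations are spaces
of convex weight functions.  The `(K,𝒫)`-join diagram assigns to a face
`σ ⊆ B` of the simplex `Δ^𝒫` the subspace
`𝒥(σ) = ⋃_{ρ ∈ K, π(ρ) = σ} ∏_{b ∈ σ} Δ^{ρ(b)} ⊆ ∏_{b ∈ σ} |K(b)|`,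
with coordinate projections as structure maps.  The geometric realization of
this diagram is the quotient of `⨆_σ Δ^σ × 𝒥(σ)` by the usual blowup
identifications.  The statement: this realization is homeomorphic to `|K|`.
-/

variable {V B : Type} [Fintype V] [DecidableEq V] [Fintype B] [DecidableEq B]

/-- The support of a weight function. -/
noncomputable def wsupp (x : V → ℝ) : Finset V :=
  Finset.univ.filter (fun v => x v ≠ 0)

/-- `K` is an abstract simplicial complex on the whole vertex type `V`. -/
def IsComplex (K : Finset V → Prop) : Prop :=
  (∀ s, K s → s.Nonempty) ∧
  (∀ s t, K s → t ⊆ s → t.Nonempty → K t) ∧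
  (∀ v : V, K {v})

/-- The geometric realization `|K|`. -/
def RealK (K : Finset V → Prop) : Type :=
  {x : V → ℝ // (∀ v, 0 ≤ x v) ∧ (∑ v, x v = 1) ∧ K (wsupp x)}

noncomputable instance (K : Finset V → Prop) : TopologicalSpace (RealK K) := by
  unfold RealK; infer_instance

/-- The closed face `Δ^σ` of the simplex on the block set `B`. -/
def Simp (σ : Finset B) : Type :=
  {y : B → ℝ // (∀ b, 0 ≤ y b) ∧ (∑ b, y b = 1) ∧ ∀ b, y b ≠ 0 → b ∈ σ}

noncomputable instance (σ : Finset B) : TopologicalSpace (Simp σ) := by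
  unfold Simp; infer_instance

/-- The value `𝒥^K_𝒫(σ)` of the join diagram on a face `σ` of `Δ^𝒫`:
tuples of points of the `|K(b)|`, `b ∈ σ`, jointly supported on a single face
`ρ` of `K` with `π(ρ) = σ`. -/
def JoinD (π : V → B) (K : Finset V → Prop) (σ : Finset B) : Type :=
  {g : {b // b ∈ σ} → (V → ℝ) //
    (∀ b, (∀ v, 0 ≤ g b v) ∧ (∑ v, g b v = 1)) ∧
    ∃ ρ : Finset V, K ρ ∧ Finset.image π ρ = σ ∧
      ∀ b : {b // b ∈ σ}, wsupp (g b) ⊆ ρ.filter (fun v => π v = b.1)}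

noncomputable instance (π : V → B) (K : Finset V → Prop) (σ : Finset B) :
    TopologicalSpace (JoinD π K σ) := by
  unfold JoinD; infer_instance

/-- Total space of the realization of the join diagram, before gluing. -/
def JoinTotal (π : V → B) (K : Finset V → Prop) : Type :=
  Σ σ : {s : Finset B // s.Nonempty}, Simp σ.1 × JoinD π K σ.1

noncomputable instance (π : V → B) (K : Finset V → Prop) :
    TopologicalSpace (JoinTotal π K) := by
  unfold JoinTotal; infer_instance

/-- The blowup identification: a point of the piece over a face `τ ⪯ σ` is
identified with the corresponding point of the piece over `σ` whose simplex
coordinate is supported in `τ` and whose diagram coordinate projects to the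
given one. -/
def JoinRel (π : V → B) (K : Finset V → Prop) :
    JoinTotal π K → JoinTotal π K → Prop :=
  fun t₁ t₂ =>
    ∃ h : t₁.1.1 ⊆ t₂.1.1,
      (t₁.2.1.1 = t₂.2.1.1) ∧
      ∀ (b : B) (hb : b ∈ t₁.1.1), t₁.2.2.1 ⟨b, hb⟩ = t₂.2.2.1 ⟨b, h hb⟩

/-- The geometric realization `Δ(𝒥^K_𝒫)` of the join diagram. -/
def JoinReal (π : V → B) (K : Finset V → Prop) : Type :=
  Quot (JoinRel π K)

noncomputable instance (π : V → B) (K : Finset V → Prop) :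
    TopologicalSpace (JoinReal π K) := by
  unfold JoinReal; infer_instance

/-!
A point of `Δ(𝒥^K_𝒫)` over a face `σ` is a pair `(y, g)`: weights `y` on the blocks and, for
each block `b ∈ σ`, a convex weight function `g b` on the vertices of `b`. It is sent to the
point `v ↦ y(π v) · g(π v)(v)` of `|K|`. This is compatible with the gluing and continuous, and
it is a bijection: a point `x` of `|K|` has the canonical preimage over the face `π(supp x)` with
`y b` the total weight of `x` on the block `b` and `g b` the restriction of `x` to `b`,
renormalised by `y b`, and every preimage is glued to it. A continuous bijection from a compact
space to a Hausdorff space is a homeomorphism.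
-/

open Finset

section JoinRealHomeomorph

omit [DecidableEq V]

variable {π : V → B} {K : Finset V → Prop}

@[simp]
lemma mem_wsupp {x : V → ℝ} {v : V} : v ∈ wsupp x ↔ x v ≠ 0 := by
  simp [wsupp]

lemma wsupp_nonempty_of_sum_eq_one {x : V → ℝ} (hx : ∑ v, x v = 1) : (wsupp x).Nonempty := by
  obtain ⟨v, -, hv⟩ := Finset.exists_ne_zero_of_sum_ne_zero (hx ▸ one_ne_zero)
  exact ⟨v, mem_wsupp.mpr hv⟩

lemma isClosed_setOf_wsupp_subset (s : Finset V) : IsClosed {x : V → ℝ | wsupp x ⊆ s} := by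
  have h : {x : V → ℝ | wsupp x ⊆ s} = ⋂ (v) (_ : v ∉ s), {x | x v = 0} := by
    ext x
    simp [Finset.subset_iff, not_imp_comm]
  rw [h]
  exact isClosed_iInter fun v => isClosed_iInter fun _ =>
    isClosed_eq (continuous_apply v) continuous_const

instance (σ : Finset B) : CompactSpace (Simp σ) := by
  have h : {y : B → ℝ | (∀ b, 0 ≤ y b) ∧ (∑ b, y b = 1) ∧ ∀ b, y b ≠ 0 → b ∈ σ}
      = stdSimplex ℝ B ∩ {y | wsupp y ⊆ σ} := by
    ext y
    simp [stdSimplex, Finset.subset_iff, and_assoc]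
  have hc := (isCompact_stdSimplex ℝ B).inter_right (isClosed_setOf_wsupp_subset σ)
  rw [← h] at hc
  exact isCompact_iff_compactSpace.mp hc

instance (σ : Finset B) : CompactSpace (JoinD π K σ) := by
  have h : {g : {b // b ∈ σ} → V → ℝ | (∀ b, (∀ v, 0 ≤ g b v) ∧ (∑ v, g b v = 1)) ∧
      ∃ ρ : Finset V, K ρ ∧ Finset.image π ρ = σ ∧
        ∀ b : {b // b ∈ σ}, wsupp (g b) ⊆ ρ.filter (fun v => π v = b.1)}
      = Set.univ.pi (fun _ => stdSimplex ℝ V) ∩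
        ⋃ ρ ∈ {ρ : Finset V | K ρ ∧ Finset.image π ρ = σ},
          ⋂ b : {b // b ∈ σ}, {g | wsupp (g b) ⊆ ρ.filter (fun v => π v = b.1)} := by
    ext g
    simp [stdSimplex, and_assoc]
  have hclosed : IsClosed (⋃ ρ ∈ {ρ : Finset V | K ρ ∧ Finset.image π ρ = σ},
      ⋂ b : {b // b ∈ σ}, {g : {b // b ∈ σ} → V → ℝ |
        wsupp (g b) ⊆ ρ.filter (fun v => π v = b.1)}) :=
    (Set.toFinite _).isClosed_biUnion fun ρ _ => isClosed_iInter fun b =>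
      (isClosed_setOf_wsupp_subset _).preimage (continuous_apply (A := fun _ => V → ℝ) b)
  have hc := (isCompact_univ_pi fun _ => isCompact_stdSimplex ℝ V).inter_right hclosed
  rw [← h] at hc
  exact isCompact_iff_compactSpace.mp hc

instance : CompactSpace (JoinTotal π K) :=
  inferInstanceAs (CompactSpace (Σ σ : {s : Finset B // s.Nonempty}, Simp σ.1 × JoinD π K σ.1))

instance : CompactSpace (JoinReal π K) :=
  inferInstanceAs (CompactSpace (Quot (JoinRel π K)))

instance : T2Space (RealK K) :=
  inferInstanceAs (T2Space {x : V → ℝ // (∀ v, 0 ≤ x v) ∧ (∑ v, x v = 1) ∧ K (wsupp x)})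

omit [DecidableEq B] in
lemma Simp.eq_zero_of_notMem {σ : Finset B} (y : Simp σ) {b : B} (hb : b ∉ σ) : y.1 b = 0 :=
  not_not.mp (mt (y.2.2.2 b) hb)

omit [Fintype B] in
lemma JoinD.eq_zero_of_ne {σ : Finset B} (g : JoinD π K σ) (b : {b // b ∈ σ}) {v : V}
    (hv : π v ≠ b.1) : g.1 b v = 0 := by
  obtain ⟨-, ρ, -, -, hsupp⟩ := g.2
  by_contra hgv
  exact hv (Finset.mem_filter.mp (hsupp b (mem_wsupp.mpr hgv))).2

omit [Fintype B] in
lemma JoinD.sum_fiber {σ : Finset B} (g : JoinD π K σ) (b : {b // b ∈ σ}) :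
    ∑ v with π v = b.1, g.1 b v = 1 := by
  rw [Finset.sum_filter_of_ne fun v _ hv => not_not.mp (mt (g.eq_zero_of_ne b) hv)]
  exact (g.2.1 b).2

noncomputable def joinPoint {σ : Finset B} (y : Simp σ) (g : JoinD π K σ) : V → ℝ :=
  fun v => if h : π v ∈ σ then y.1 (π v) * g.1 ⟨π v, h⟩ v else 0

section joinPoint

variable {σ : Finset B} (y : Simp σ) (g : JoinD π K σ)

lemma joinPoint_nonneg (v : V) : 0 ≤ joinPoint y g v := by
  unfold joinPoint
  split
  · exact mul_nonneg (y.2.1 _) ((g.2.1 _).1 v)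
  · exact le_rfl

lemma sum_fiber_joinPoint (b : B) : ∑ v with π v = b, joinPoint y g v = y.1 b := by
  by_cases hb : b ∈ σ
  · have h : ∀ v ∈ univ.filter (π · = b), joinPoint y g v = y.1 b * g.1 ⟨b, hb⟩ v := by
      intro v hv
      obtain rfl := (Finset.mem_filter.mp hv).2
      simp [joinPoint, hb]
    rw [Finset.sum_congr rfl h, ← Finset.mul_sum, g.sum_fiber ⟨b, hb⟩, mul_one]
  · rw [y.eq_zero_of_notMem hb]
    refine Finset.sum_eq_zero fun v hv => ?_
    obtain rfl := (Finset.mem_filter.mp hv).2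
    simp [joinPoint, hb]

lemma sum_joinPoint : ∑ v, joinPoint y g v = 1 := by
  rw [← Finset.sum_fiberwise univ π]
  simp only [sum_fiber_joinPoint]
  exact y.2.2.1

lemma wsupp_joinPoint_subset {ρ : Finset V}
    (hρ : ∀ b : {b // b ∈ σ}, wsupp (g.1 b) ⊆ ρ.filter (fun v => π v = b.1)) :
    wsupp (joinPoint y g) ⊆ ρ := by
  intro v hv
  simp only [mem_wsupp, joinPoint] at hv
  split at hv
  · exact Finset.filter_subset _ _ (hρ _ (mem_wsupp.mpr (right_ne_zero_of_mul hv)))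
  · exact absurd rfl hv

lemma image_wsupp_joinPoint_subset : (wsupp (joinPoint y g)).image π ⊆ σ := by
  simp only [Finset.image_subset_iff, mem_wsupp, joinPoint]
  intro v hv
  by_contra hvσ
  exact hv (dif_neg hvσ)

lemma isComplex_wsupp_joinPoint (hK : IsComplex K) : K (wsupp (joinPoint y g)) := by
  obtain ⟨-, ρ, hKρ, -, hρ⟩ := g.2
  exact hK.2.1 ρ _ hKρ (wsupp_joinPoint_subset y g hρ)
    (wsupp_nonempty_of_sum_eq_one (sum_joinPoint y g))

end joinPoint

lemma continuous_joinPoint (σ : Finset B) :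
    Continuous fun p : Simp σ × JoinD π K σ => joinPoint p.1 p.2 := by
  refine continuous_pi fun v => ?_
  unfold joinPoint
  split
  · exact ((continuous_apply _).comp (continuous_subtype_val.comp continuous_fst)).mul
      ((continuous_apply v).comp ((continuous_apply _).comp
        (continuous_subtype_val.comp continuous_snd)))
  · exact continuous_const

lemma joinPoint_eq_of_joinRel {t₁ t₂ : JoinTotal π K} (h : JoinRel π K t₁ t₂) :
    joinPoint t₁.2.1 t₁.2.2 = joinPoint t₂.2.1 t₂.2.2 := by
  obtain ⟨hsub, hy, hg⟩ := h
  funext v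
  by_cases h₁ : π v ∈ t₁.1.1
  · simp only [joinPoint, dif_pos h₁, dif_pos (hsub h₁), hy, hg (π v) h₁]
  · have hy₂ : t₂.2.1.1 (π v) = 0 := hy ▸ t₁.2.1.eq_zero_of_notMem h₁
    simp [joinPoint, dif_neg h₁, hy₂]

noncomputable def JoinTotal.toRealK (hK : IsComplex K) (t : JoinTotal π K) : RealK K :=
  ⟨joinPoint t.2.1 t.2.2, joinPoint_nonneg t.2.1 t.2.2, sum_joinPoint t.2.1 t.2.2,
    isComplex_wsupp_joinPoint t.2.1 t.2.2 hK⟩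

lemma JoinTotal.continuous_toRealK (hK : IsComplex K) :
    Continuous (JoinTotal.toRealK (π := π) hK) :=
  Continuous.subtype_mk (continuous_sigma fun σ => continuous_joinPoint σ.1) _

noncomputable def blockWeight (π : V → B) (x : V → ℝ) (b : B) : ℝ :=
  ∑ v with π v = b, x v

namespace RealK

variable (π) (x : RealK K)

omit [Fintype B] in
lemma blockWeight_nonneg (b : B) : 0 ≤ blockWeight π x.1 b :=
  Finset.sum_nonneg fun v _ => x.2.1 v

omit [Fintype B] in
lemma blockWeight_pos {b : B} (hb : b ∈ (wsupp x.1).image π) : 0 < blockWeight π x.1 b := by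
  obtain ⟨v, hv, rfl⟩ := Finset.mem_image.mp hb
  exact (lt_of_le_of_ne (x.2.1 v) (Ne.symm (mem_wsupp.mp hv))).trans_le
    (Finset.single_le_sum (fun w _ => x.2.1 w) (by simp))

noncomputable def blockFace : Finset B := (wsupp x.1).image π

noncomputable def blockWeights : Simp (blockFace π x) :=
  ⟨blockWeight π x.1, blockWeight_nonneg π x,
    by unfold blockWeight; rw [Finset.sum_fiberwise univ π x.1]; exact x.2.2.1,
    fun b hb => by
      obtain ⟨v, hv, hvx⟩ := Finset.exists_ne_zero_of_sum_ne_zero hb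
      exact Finset.mem_image.mpr ⟨v, mem_wsupp.mpr hvx, (Finset.mem_filter.mp hv).2⟩⟩

noncomputable def normalizedBlocks : JoinD π K (blockFace π x) :=
  ⟨fun b v => if π v = b.1 then x.1 v / blockWeight π x.1 b.1 else 0,
    fun b => ⟨fun v => by
        dsimp only
        split
        · exact div_nonneg (x.2.1 v) (blockWeight_nonneg π x b.1)
        · exact le_rfl,
      by rw [← Finset.sum_filter, ← Finset.sum_div, ← blockWeight,
        div_self (blockWeight_pos π x b.2).ne']⟩,
    wsupp x.1, x.2.2.2, rfl, fun b v hv => by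
      rw [mem_wsupp] at hv
      dsimp only at hv
      split at hv
      · exact Finset.mem_filter.mpr ⟨mem_wsupp.mpr (left_ne_zero_of_mul hv), by assumption⟩
      · exact absurd rfl hv⟩

noncomputable def canonicalPreimage : JoinTotal π K :=
  ⟨⟨blockFace π x, (wsupp_nonempty_of_sum_eq_one x.2.2.1).image π⟩,
    blockWeights π x, normalizedBlocks π x⟩

lemma joinPoint_canonicalPreimage :
    joinPoint (canonicalPreimage π x).2.1 (canonicalPreimage π x).2.2 = x.1 := by
  funext v
  by_cases hv : π v ∈ blockFace π x
  · simp only [joinPoint, canonicalPreimage, blockWeights, normalizedBlocks, dif_pos hv, if_pos]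
    field_simp [(blockWeight_pos π x hv).ne']
  · have hx : x.1 v = 0 := not_not.mp fun hx => hv (Finset.mem_image_of_mem π (mem_wsupp.mpr hx))
    simp [joinPoint, canonicalPreimage, hv, hx]

end RealK

lemma JoinTotal.joinRel_canonicalPreimage_toRealK (hK : IsComplex K) (t : JoinTotal π K) :
    JoinRel π K (RealK.canonicalPreimage π (t.toRealK hK)) t := by
  obtain ⟨⟨σ, hσ⟩, y, g⟩ := t
  have hweight : blockWeight π (joinPoint y g) = y.1 := funext (sum_fiber_joinPoint y g)
  refine ⟨image_wsupp_joinPoint_subset y g, hweight, fun b hb => funext fun v => ?_⟩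
  have hbσ : b ∈ σ := image_wsupp_joinPoint_subset y g hb
  have hyb : y.1 b ≠ 0 := hweight ▸ (RealK.blockWeight_pos π (toRealK hK ⟨⟨σ, hσ⟩, y, g⟩) hb).ne'
  change (if π v = b then joinPoint y g v / blockWeight π (joinPoint y g) b else 0) = _
  split
  · subst b
    simp only [joinPoint, dif_pos hbσ, hweight]
    field_simp
  · exact (g.eq_zero_of_ne ⟨b, hbσ⟩ (by assumption)).symm

noncomputable def JoinReal.toRealK (hK : IsComplex K) : JoinReal π K → RealK K :=
  Quot.lift (JoinTotal.toRealK hK) fun _ _ h => Subtype.ext (joinPoint_eq_of_joinRel h)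

lemma JoinReal.continuous_toRealK (hK : IsComplex K) : Continuous (toRealK (π := π) hK) :=
  continuous_quot_lift _ (JoinTotal.continuous_toRealK hK)

lemma JoinReal.bijective_toRealK (hK : IsComplex K) : Function.Bijective (toRealK (π := π) hK) := by
  have hcanonical (t : JoinTotal π K) :
      Quot.mk _ (RealK.canonicalPreimage π (t.toRealK hK)) = (Quot.mk _ t : JoinReal π K) :=
    Quot.sound (t.joinRel_canonicalPreimage_toRealK hK)
  refine ⟨?_, fun x => ⟨Quot.mk _ (RealK.canonicalPreimage π x),
    Subtype.ext (RealK.joinPoint_canonicalPreimage π x)⟩⟩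
  rintro ⟨t₁⟩ ⟨t₂⟩ h
  rw [← hcanonical t₁, ← hcanonical t₂]
  exact congrArg (fun x => Quot.mk _ (RealK.canonicalPreimage π x)) h

end JoinRealHomeomorph

theorem joinReal_homeomorph_general (π : V → B)
    (K : Finset V → Prop) (hK : IsComplex K) :
    Nonempty (JoinReal π K ≃ₜ RealK K) :=
  ⟨(JoinReal.continuous_toRealK (π := π) hK).homeoOfEquivCompactToT2
    (f := Equiv.ofBijective _ (JoinReal.bijective_toRealK hK))⟩

/-- Lemma 3.3 of the paper: for a finite simplicial complex
`K` with a partition `𝒫` of its vertex set (the fibers of `π`), the geometric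
realization of the `(K,𝒫)`-join diagram is homeomorphic to `|K|`. -/
theorem joinReal_homeomorph (π : V → B) (hπ : Function.Surjective π)
    (K : Finset V → Prop) (hK : IsComplex K) :
    Nonempty (JoinReal π K ≃ₜ RealK K) :=
  joinReal_homeomorph_general π K hK
end
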